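/- Let Y be a closed proper linear subspace of a Banach space X. If the weak*-closure of the linear span of 𝒥_Y equals X*, then Y is anti-coproximinal in X. Moreover, if Sm(X) ∩ Y is dense in Y, then Y is anti-coproximinal in X if and only if the weak*-closure of the linear span of 𝒥_Y equals X*. -/

import Mathlib

open Filter Topology Metric NormedSpace

/-- The set of supporting functionals of `x`. -/
def suppFunctionals (𝕜 : Type*) {X : Type*} [RCLike 𝕜] [NormedAddCommGroup X]
    [NormedSpace 𝕜 X] (x : X) : Set (StrongDual 𝕜 X) :=
  {φ | ‖φ‖ = 1 ∧ φ x = (‖x‖ : 𝕜)}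

/-- The set of smooth points of `X`: nonzero points with a unique supporting functional. -/
def smoothPoints (𝕜 : Type*) {X : Type*} [RCLike 𝕜] [NormedAddCommGroup X]
    [NormedSpace 𝕜 X] : Set X :=
  {x | x ≠ 0 ∧ ∃ φ, suppFunctionals 𝕜 x = {φ}}

/-- `𝒥_Y`: norm-one functionals attaining the value `1` at some smooth unit vector of `Y`. -/
def smoothSuppSet (𝕜 : Type*) {X : Type*} [RCLike 𝕜] [NormedAddCommGroup X]
    [NormedSpace 𝕜 X] (Y : Submodule 𝕜 X) : Set (StrongDual 𝕜 X) :=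
  {φ | ‖φ‖ = 1 ∧ ∃ y, y ∈ Y ∧ y ∈ smoothPoints 𝕜 ∧ ‖y‖ = 1 ∧ φ y = 1}

/-- `Y` is anti-coproximinal: no nonzero `x` is Birkhoff–James orthogonal to all of `Y`. -/
def AntiCoproximinal (𝕜 : Type*) {X : Type*} [RCLike 𝕜] [NormedAddCommGroup X]
    [NormedSpace 𝕜 X] (S : Set X) : Prop :=
  ∀ x : X, x ≠ 0 → ∃ y ∈ S, ¬ ∀ lam : 𝕜, ‖y‖ ≤ ‖y + lam • x‖

/-!
By James's characterization, a nonzero `y` is Birkhoff–James orthogonal to `x` iff some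
supporting functional of `y` vanishes at `x`: Hahn–Banach in `X ⧸ 𝕜 ∙ x`, where orthogonality
says that `y` keeps its norm. At a smooth point that functional is unique, so `𝒥_Y` annihilates
`x` iff every smooth point of `Y` is orthogonal to `x`, and, orthogonality being a closed condition,
iff every point of `Y` is when the smooth points are dense in `Y`. On the dual side, the weak-*
topology is locally convex and its continuous functionals are the evaluations, so by the geometric
Hahn–Banach theorem `span 𝒥_Y` is weak-* dense iff `𝒥_Y` separates the points of `X`.
-/

theorem Submodule.apply_eq_zero_of_forall_lt_re {𝕜 E : Type*} [RCLike 𝕜] [AddCommGroup E]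
    [Module 𝕜 E] {M : Submodule 𝕜 E} {f : E →ₗ[𝕜] 𝕜} {u : ℝ}
    (h : ∀ m ∈ M, u < RCLike.re (f m)) {m : E} (hm : m ∈ M) : f m = 0 := by
  by_contra hfm
  have := h (((u : 𝕜) / f m) • m) (M.smul_mem _ hm)
  rw [map_smul, smul_eq_mul, div_mul_cancel₀ _ hfm, RCLike.ofReal_re] at this
  exact lt_irrefl u this

section WeakStar

variable {𝕜 E : Type*} [RCLike 𝕜] [AddCommGroup E] [TopologicalSpace E] [Module 𝕜 E]

instance WeakDual.instIsScalarTowerReal : IsScalarTower ℝ 𝕜 (WeakDual 𝕜 E) :=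
  inferInstanceAs (IsScalarTower ℝ 𝕜 (StrongDual 𝕜 E))

instance WeakDual.instLocallyConvexSpaceReal : LocallyConvexSpace ℝ (WeakDual 𝕜 E) :=
  WeakBilin.locallyConvexSpace

theorem WeakDual.closure_toWeakDual_span_eq_univ {S : Set (StrongDual 𝕜 E)}
    (hS : ∀ x : E, (∀ φ ∈ S, φ x = 0) → x = 0) :
    closure (StrongDual.toWeakDual '' (Submodule.span 𝕜 S : Set (StrongDual 𝕜 E))) = Set.univ := by
  set M : Submodule 𝕜 (WeakDual 𝕜 E) := (Submodule.span 𝕜 S).map StrongDual.toWeakDual.toLinearMap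
  have hM : closure (StrongDual.toWeakDual '' (Submodule.span 𝕜 S : Set (StrongDual 𝕜 E))) =
      M.topologicalClosure := M.topologicalClosure_coe.symm
  refine Set.eq_univ_of_forall fun ψ => by_contra fun hψ => ?_
  rw [hM] at hψ
  obtain ⟨f, u, hfψ, hfM⟩ := RCLike.geometric_hahn_banach_point_closed (𝕜 := 𝕜)
    (M.topologicalClosure.restrictScalars ℝ).convex M.isClosed_topologicalClosure hψ
  obtain ⟨x, hx⟩ := LinearMap.dualEmbedding_surjective (topDualPairing 𝕜 E) f
  have hf : ∀ ψ : WeakDual 𝕜 E, f ψ = ψ x := fun ψ => by rw [← hx]; rfl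
  have hx0 : x = 0 := hS x fun φ hφ => by
    rw [← StrongDual.coe_toWeakDual φ, ← hf]
    exact Submodule.apply_eq_zero_of_forall_lt_re (f := f.toLinearMap) hfM
      (M.le_topologicalClosure (Submodule.mem_map_of_mem (Submodule.subset_span hφ)))
  have h0 := hfM 0 (zero_mem _)
  rw [map_zero, map_zero] at h0
  rw [hf, hx0, map_zero, map_zero] at hfψ
  exact lt_asymm hfψ h0

theorem WeakDual.eq_zero_of_closure_toWeakDual_span_eq_univ [SeparatingDual 𝕜 E]
    {S : Set (StrongDual 𝕜 E)}
    (hS : closure (StrongDual.toWeakDual '' (Submodule.span 𝕜 S : Set (StrongDual 𝕜 E))) = Set.univ)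
    {x : E} (hx : ∀ φ ∈ S, φ x = 0) : x = 0 := by
  have hspan : Submodule.span 𝕜 S ≤ LinearMap.ker ((topDualPairing 𝕜 E).flip x) :=
    Submodule.span_le.2 hx
  have hclosure : closure (StrongDual.toWeakDual '' (Submodule.span 𝕜 S : Set (StrongDual 𝕜 E))) ⊆
      {ψ : WeakDual 𝕜 E | ψ x = 0} := by
    refine closure_minimal ?_ (isClosed_eq (WeakDual.eval_continuous x) continuous_const)
    rintro _ ⟨φ, hφ, rfl⟩
    exact hspan hφ
  rw [hS] at hclosure
  exact SeparatingDual.eq_zero_of_forall_dual_eq_zero fun φ =>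
    hclosure (Set.mem_univ (StrongDual.toWeakDual φ))

theorem WeakDual.closure_toWeakDual_span_eq_univ_iff [SeparatingDual 𝕜 E]
    {S : Set (StrongDual 𝕜 E)} :
    closure (StrongDual.toWeakDual '' (Submodule.span 𝕜 S : Set (StrongDual 𝕜 E))) = Set.univ ↔
      ∀ x : E, (∀ φ ∈ S, φ x = 0) → x = 0 :=
  ⟨fun hS _ => eq_zero_of_closure_toWeakDual_span_eq_univ hS, closure_toWeakDual_span_eq_univ⟩

end WeakStar

def BirkhoffJamesOrthogonal (𝕜 : Type*) {X : Type*} [RCLike 𝕜] [NormedAddCommGroup X]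
    [NormedSpace 𝕜 X] (x y : X) : Prop :=
  ∀ lam : 𝕜, ‖x‖ ≤ ‖x + lam • y‖

section BirkhoffJames

variable {𝕜 X : Type*} [RCLike 𝕜] [NormedAddCommGroup X] [NormedSpace 𝕜 X]

theorem isClosed_setOf_birkhoffJamesOrthogonal (y : X) :
    IsClosed {x : X | BirkhoffJamesOrthogonal 𝕜 x y} := by
  simp only [BirkhoffJamesOrthogonal, Set.ofPred_forall]
  exact isClosed_iInter fun lam =>
    isClosed_le continuous_norm (continuous_id.add continuous_const).norm

theorem antiCoproximinal_iff {S : Set X} :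
    AntiCoproximinal 𝕜 S ↔ ∀ x : X, (∀ y ∈ S, BirkhoffJamesOrthogonal 𝕜 y x) → x = 0 :=
  forall_congr' fun x => by
    rw [← not_imp_not]
    push Not
    rfl

theorem mem_suppFunctionals_of_norm_le_one {x : X} {φ : StrongDual 𝕜 X} (hx : x ≠ 0)
    (hφ : ‖φ‖ ≤ 1) (hφx : φ x = ‖x‖) : φ ∈ suppFunctionals 𝕜 x := by
  refine ⟨le_antisymm hφ ?_, hφx⟩
  have hx' : 0 < ‖x‖ := norm_pos_iff.2 hx
  have := φ.le_opNorm x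
  rw [hφx, RCLike.norm_ofReal, abs_of_pos hx'] at this
  exact (le_mul_iff_one_le_left hx').1 this

theorem suppFunctionals_smul_of_pos {r : ℝ} (hr : 0 < r) (x : X) :
    suppFunctionals 𝕜 ((r : 𝕜) • x) = suppFunctionals 𝕜 x := by
  ext φ
  simp only [suppFunctionals, Set.mem_ofPred_eq, map_smul, norm_smul, RCLike.norm_ofReal,
    abs_of_pos hr, smul_eq_mul, RCLike.ofReal_mul]
  exact and_congr_right fun _ => mul_right_inj' (RCLike.ofReal_ne_zero.2 hr.ne')

theorem BirkhoffJamesOrthogonal.of_mem_suppFunctionals {x y : X} {φ : StrongDual 𝕜 X}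
    (hφ : φ ∈ suppFunctionals 𝕜 x) (hφy : φ y = 0) : BirkhoffJamesOrthogonal 𝕜 x y := fun lam =>
  calc ‖x‖ = ‖φ (x + lam • y)‖ := by
        rw [map_add, map_smul, hφy, smul_zero, add_zero, hφ.2, RCLike.norm_ofReal, abs_norm]
    _ ≤ ‖φ‖ * ‖x + lam • y‖ := φ.le_opNorm _
    _ = ‖x + lam • y‖ := by rw [hφ.1, one_mul]

theorem BirkhoffJamesOrthogonal.norm_mk_span_singleton_eq {x y : X}
    (h : BirkhoffJamesOrthogonal 𝕜 x y) :
    ‖(Submodule.Quotient.mk x : X ⧸ 𝕜 ∙ y)‖ = ‖x‖ := by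
  refine le_antisymm (Submodule.Quotient.norm_mk_le _ x) (QuotientAddGroup.le_norm_iff.2 ?_)
  intro m hm
  obtain ⟨c, hc⟩ := Submodule.mem_span_singleton.1 ((Submodule.Quotient.eq _).1 hm)
  rw [eq_add_of_sub_eq hc.symm, add_comm]
  exact h c

theorem BirkhoffJamesOrthogonal.exists_mem_suppFunctionals {x y : X} (hx : x ≠ 0)
    (h : BirkhoffJamesOrthogonal 𝕜 x y) : ∃ φ ∈ suppFunctionals 𝕜 x, φ y = 0 := by
  have hmk : ‖(Submodule.Quotient.mk x : X ⧸ 𝕜 ∙ y)‖ = ‖x‖ := h.norm_mk_span_singleton_eq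
  obtain ⟨g, hg, hgx⟩ := exists_dual_vector 𝕜 (Submodule.Quotient.mk x : X ⧸ 𝕜 ∙ y)
    (by rw [hmk]; exact norm_ne_zero_iff.2 hx)
  have hmkQ : ‖(𝕜 ∙ y).mkQL‖ ≤ 1 :=
    ContinuousLinearMap.opNorm_le_bound _ zero_le_one fun m => by
      rw [one_mul]; exact Submodule.Quotient.norm_mk_le _ m
  refine ⟨g ∘L (𝕜 ∙ y).mkQL, mem_suppFunctionals_of_norm_le_one hx ?_ ?_, ?_⟩
  · calc ‖g ∘L (𝕜 ∙ y).mkQL‖ ≤ ‖g‖ * ‖(𝕜 ∙ y).mkQL‖ := g.opNorm_comp_le _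
      _ ≤ 1 := by rw [hg, one_mul]; exact hmkQ
  · simpa [hmk] using hgx
  · simp [(Submodule.Quotient.mk_eq_zero _).2 (Submodule.mem_span_singleton_self y)]

theorem mem_smoothSuppSet_iff {Y : Submodule 𝕜 X} {φ : StrongDual 𝕜 X} :
    φ ∈ smoothSuppSet 𝕜 Y ↔ ∃ y ∈ Y, y ≠ 0 ∧ suppFunctionals 𝕜 y = {φ} := by
  constructor
  · rintro ⟨hφ, y, hyY, ⟨hy0, χ, hχ⟩, hy1, hφy⟩
    have hφJ : φ ∈ suppFunctionals 𝕜 y := ⟨hφ, by rw [hy1, RCLike.ofReal_one, hφy]⟩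
    rw [hχ, Set.mem_singleton_iff] at hφJ
    exact ⟨y, hyY, hy0, hφJ ▸ hχ⟩
  · rintro ⟨y, hyY, hy0, hJ⟩
    have hy : 0 < ‖y‖ := norm_pos_iff.2 hy0
    set u : X := ((‖y‖⁻¹ : ℝ) : 𝕜) • y
    have hu1 : ‖u‖ = 1 := by
      rw [norm_smul, RCLike.norm_ofReal, abs_of_pos (inv_pos.2 hy), inv_mul_cancel₀ hy.ne']
    have huJ : suppFunctionals 𝕜 u = {φ} := by rw [suppFunctionals_smul_of_pos (inv_pos.2 hy), hJ]
    have hφu : φ ∈ suppFunctionals 𝕜 u := huJ ▸ rfl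
    refine ⟨hφu.1, u, Y.smul_mem _ hyY, ⟨norm_ne_zero_iff.1 (hu1 ▸ one_ne_zero), φ, huJ⟩, hu1, ?_⟩
    rw [hφu.2, hu1, RCLike.ofReal_one]

theorem forall_smoothSuppSet_apply_eq_zero_iff {Y : Submodule 𝕜 X} {x : X} :
    (∀ φ ∈ smoothSuppSet 𝕜 Y, φ x = 0) ↔
      ∀ y ∈ smoothPoints 𝕜 ∩ (Y : Set X), BirkhoffJamesOrthogonal 𝕜 y x := by
  constructor
  · rintro h y ⟨⟨hy0, φ, hJ⟩, hyY⟩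
    exact .of_mem_suppFunctionals (hJ ▸ rfl) (h φ (mem_smoothSuppSet_iff.2 ⟨y, hyY, hy0, hJ⟩))
  · intro h φ hφ
    obtain ⟨y, hyY, hy0, hJ⟩ := mem_smoothSuppSet_iff.1 hφ
    obtain ⟨ψ, hψ, hψx⟩ := (h y ⟨⟨hy0, φ, hJ⟩, hyY⟩).exists_mem_suppFunctionals hy0
    rw [hJ, Set.mem_singleton_iff] at hψ
    rwa [hψ] at hψx

end BirkhoffJames

theorem antiCoproximinal_of_weakStar_dense_span_general
    {𝕜 X : Type*} [RCLike 𝕜] [NormedAddCommGroup X] [NormedSpace 𝕜 X]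
    (Y : Submodule 𝕜 X) :
    (closure ((fun φ => StrongDual.toWeakDual φ) ''
        ((Submodule.span 𝕜 (smoothSuppSet 𝕜 Y) : Submodule 𝕜 (StrongDual 𝕜 X)) : Set (StrongDual 𝕜 X))) =
          Set.univ →
      AntiCoproximinal 𝕜 (Y : Set X)) ∧
    ((Y : Set X) ⊆ closure (smoothPoints 𝕜 ∩ (Y : Set X)) →
      (AntiCoproximinal 𝕜 (Y : Set X) ↔
        closure ((fun φ => StrongDual.toWeakDual φ) ''
          ((Submodule.span 𝕜 (smoothSuppSet 𝕜 Y) : Submodule 𝕜 (StrongDual 𝕜 X)) : Set (StrongDual 𝕜 X))) =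
            Set.univ)) := by
  rw [antiCoproximinal_iff, WeakDual.closure_toWeakDual_span_eq_univ_iff]
  have of_separating : (∀ x : X, (∀ φ ∈ smoothSuppSet 𝕜 Y, φ x = 0) → x = 0) →
      ∀ x : X, (∀ y ∈ (Y : Set X), BirkhoffJamesOrthogonal 𝕜 y x) → x = 0 :=
    fun hsep x hx => hsep x (forall_smoothSuppSet_apply_eq_zero_iff.2 fun y hy => hx y hy.2)
  refine ⟨of_separating, fun hdense => ⟨fun hAC x hx => hAC x fun y hy => ?_, of_separating⟩⟩
  exact closure_minimal (forall_smoothSuppSet_apply_eq_zero_iff.1 hx)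
    (isClosed_setOf_birkhoffJamesOrthogonal x) (hdense hy)

/-- If the weak*-closure of `span 𝒥_Y` is all of `X*`, then the closed proper
subspace `Y` is anti-coproximinal; moreover, if the smooth points of `X` lying in `Y` are dense
in `Y`, the converse holds as well. -/
theorem antiCoproximinal_of_weakStar_dense_span
    {𝕜 X : Type*} [RCLike 𝕜] [NormedAddCommGroup X] [NormedSpace 𝕜 X] [CompleteSpace X]
    (Y : Submodule 𝕜 X) (hYc : IsClosed (Y : Set X)) (hYp : Y ≠ ⊤) :
    (closure ((fun φ => StrongDual.toWeakDual φ) ''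
        ((Submodule.span 𝕜 (smoothSuppSet 𝕜 Y) : Submodule 𝕜 (StrongDual 𝕜 X)) : Set (StrongDual 𝕜 X))) =
          Set.univ →
      AntiCoproximinal 𝕜 (Y : Set X)) ∧
    ((Y : Set X) ⊆ closure (smoothPoints 𝕜 ∩ (Y : Set X)) →
      (AntiCoproximinal 𝕜 (Y : Set X) ↔
        closure ((fun φ => StrongDual.toWeakDual φ) ''
          ((Submodule.span 𝕜 (smoothSuppSet 𝕜 Y) : Submodule 𝕜 (StrongDual 𝕜 X)) : Set (StrongDual 𝕜 X))) =
            Set.univ)) :=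
  antiCoproximinal_of_weakStar_dense_span_general Y
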